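/- arXiv:2302.10309 — 5 statements merged into one kernel-verified Lean document; each statement's English description precedes it below -/
import Mathlib

section
/- Let ρ₁, ρ₀, μ be probability measures on a measurable space Ω with ρ₁ ≪ μ and ρ₀ ≪ μ, and let a, b > 0 be real numbers with a + b = 1. Set ν := a•ρ₁ + b•ρ₀. Then ν ≪ μ and the compensation identity a·KL(ρ₁‖μ) + b·KL(ρ₀‖μ) = a·KL(ρ₁‖ν) + b·KL(ρ₀‖ν) + KL(ν‖μ) holds in [0,+∞]. -/
open MeasureTheory ENNReal Classical

/-- The Kullback–Leibler divergence of `μ` with respect to `ν`, valued in `[0,+∞]`: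
`KL(μ‖ν) = ∫ log (dμ/dν) dμ` if `μ ≪ ν` and the log-likelihood ratio is integrable,
and `+∞` otherwise (Mathlib's `InformationTheory.klDiv`). -/

noncomputable def klDiv {Ω : Type*} [MeasurableSpace Ω] (μ ν : Measure Ω) : ℝ≥0∞ :=
  if μ ≪ ν ∧ Integrable (llr μ ν) μ then ENNReal.ofReal (∫ ω, llr μ ν ω ∂μ) else ⊤


lemma aux_abs_mul_log_le {t c : ℝ} (ht0 : 0 ≤ t) (htc : t ≤ c) :
    |t * Real.log t| ≤ max 1 (c * |Real.log c|) := by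
  rcases le_or_gt t 1 with ht1 | ht1
  · rcases eq_or_lt_of_le ht0 with h0 | h0
    · simp [← h0]
    · exact le_max_of_le_left (by rw [mul_comm]; exact (Real.abs_log_mul_self_lt t h0 ht1).le)
  · have hc1 : 1 < c := lt_of_lt_of_le ht1 htc
    have hlog : Real.log t ≤ Real.log c := Real.log_le_log (by linarith) htc
    have h1 : 0 ≤ Real.log t := Real.log_nonneg ht1.le
    refine le_max_of_le_right ?_
    rw [abs_of_nonneg (mul_nonneg ht0 h1), abs_of_nonneg (Real.log_nonneg hc1.le)]
    exact mul_le_mul htc hlog h1 (by linarith)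

lemma aux_integrable_llr_of_bounded {Ω : Type*} [MeasurableSpace Ω] {ρ ν : Measure Ω}
    [IsFiniteMeasure ρ] [IsFiniteMeasure ν] (hρν : ρ ≪ ν) {c : ℝ}
    (hc : ∀ᵐ x ∂ν, (ρ.rnDeriv ν x).toReal ≤ c) :
    Integrable (llr ρ ν) ρ := by
  rw [← integrable_rnDeriv_smul_iff hρν]
  simp_rw [smul_eq_mul]
  refine Integrable.mono' (integrable_const (max 1 (c * |Real.log c|)))
    (((Measure.measurable_rnDeriv ρ ν).ennreal_toReal.mul
      (measurable_llr ρ ν)).aestronglyMeasurable) ?_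
  filter_upwards [hc] with x hx
  rw [Real.norm_eq_abs]
  exact aux_abs_mul_log_le ENNReal.toReal_nonneg hx

lemma aux_integral_llr_nonneg {Ω : Type*} [MeasurableSpace Ω] {ρ ν : Measure Ω}
    [IsProbabilityMeasure ρ] [IsProbabilityMeasure ν] (hρν : ρ ≪ ν)
    (h : Integrable (llr ρ ν) ρ) : 0 ≤ ∫ x, llr ρ ν x ∂ρ := by
  have hexp : (fun x ↦ Real.exp (-llr ρ ν x)) =ᵐ[ρ] fun x ↦ (ν.rnDeriv ρ x).toReal :=
    exp_neg_llr hρν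
  have hint : Integrable (fun x ↦ Real.exp (-llr ρ ν x)) ρ :=
    Measure.integrable_toReal_rnDeriv.congr hexp.symm
  have hJ : Real.exp (∫ x, -llr ρ ν x ∂ρ) ≤ ∫ x, Real.exp (-llr ρ ν x) ∂ρ :=
    convexOn_exp.map_integral_le Real.continuous_exp.continuousOn isClosed_univ
      (Filter.Eventually.of_forall fun x => Set.mem_univ _) h.neg hint
  have hle1 : ∫ x, Real.exp (-llr ρ ν x) ∂ρ ≤ 1 := by
    rw [integral_congr_ae hexp, Measure.integral_toReal_rnDeriv']
    simp only [measureReal_def, measure_univ, ENNReal.toReal_one]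
    have := ENNReal.toReal_nonneg (a := ν.singularPart ρ Set.univ)
    linarith
  have : Real.exp (-∫ x, llr ρ ν x ∂ρ) ≤ 1 := by
    rw [← integral_neg] at *
    exact hJ.trans hle1
  have h0 := Real.exp_le_one_iff.mp this
  linarith

lemma aux_llr_chain {Ω : Type*} [MeasurableSpace Ω] {ρ ν μ : Measure Ω}
    [IsFiniteMeasure ρ] [IsFiniteMeasure ν] [IsFiniteMeasure μ]
    (hρν : ρ ≪ ν) (hνμ : ν ≪ μ) :
    llr ρ μ =ᵐ[ρ] fun x ↦ llr ρ ν x + llr ν μ x := by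
  have hρμ := hρν.trans hνμ
  have h1 : ρ.rnDeriv ν * ν.rnDeriv μ =ᵐ[ρ] ρ.rnDeriv μ :=
    hρμ.ae_le (Measure.rnDeriv_mul_rnDeriv hρν)
  filter_upwards [h1, Measure.rnDeriv_pos hρν, hρν.ae_le (Measure.rnDeriv_lt_top ρ ν),
    hρν.ae_le (Measure.rnDeriv_pos hνμ), hρμ.ae_le (Measure.rnDeriv_lt_top ν μ)]
    with x hx hpos1 hlt1 hpos2 hlt2
  simp only [llr_def]
  rw [← hx, Pi.mul_apply, ENNReal.toReal_mul,
    Real.log_mul (ENNReal.toReal_pos hpos1.ne' hlt1.ne).ne'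
      (ENNReal.toReal_pos hpos2.ne' hlt2.ne).ne']

/-- **Compensation identity.** For probability measures `ρ₁, ρ₀, μ` with `ρ₁ ≪ μ`, `ρ₀ ≪ μ`,
and weights `a, b > 0` with `a + b = 1`, the mixture `ν := a•ρ₁ + b•ρ₀` satisfies `ν ≪ μ` and
`a·KL(ρ₁‖μ) + b·KL(ρ₀‖μ) = a·KL(ρ₁‖ν) + b·KL(ρ₀‖ν) + KL(ν‖μ)` in `[0,+∞]`. -/
theorem kl_compensation_identity {Ω : Type*} [MeasurableSpace Ω]
    (ρ₁ ρ₀ μ : Measure Ω)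
    [IsProbabilityMeasure ρ₁] [IsProbabilityMeasure ρ₀] [IsProbabilityMeasure μ]
    (h₁ : ρ₁ ≪ μ) (h₀ : ρ₀ ≪ μ)
    (a b : ℝ) (ha : 0 < a) (hb : 0 < b) (hab : a + b = 1)
    (ν : Measure Ω) (hν : ν = ENNReal.ofReal a • ρ₁ + ENNReal.ofReal b • ρ₀) :
    ν ≪ μ ∧
      ENNReal.ofReal a * klDiv ρ₁ μ + ENNReal.ofReal b * klDiv ρ₀ μ =
        ENNReal.ofReal a * klDiv ρ₁ ν + ENNReal.ofReal b * klDiv ρ₀ ν + klDiv ν μ := by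
  set A := ENNReal.ofReal a with hA_def
  set B := ENNReal.ofReal b with hB_def
  have hA0 : A ≠ 0 := by simp [hA_def, ENNReal.ofReal_eq_zero, not_le, ha]
  have hB0 : B ≠ 0 := by simp [hB_def, ENNReal.ofReal_eq_zero, not_le, hb]
  have hA' : A ≠ ∞ := ENNReal.ofReal_ne_top
  have hB' : B ≠ ∞ := ENNReal.ofReal_ne_top
  haveI hνprob : IsProbabilityMeasure ν := by
    constructor
    rw [hν]
    simp only [Measure.coe_add, Pi.add_apply, Measure.smul_apply, smul_eq_mul, measure_univ,
      mul_one]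
    rw [hA_def, hB_def, ← ENNReal.ofReal_add ha.le hb.le, hab, ENNReal.ofReal_one]
  have h1ν : ρ₁ ≪ ν := by
    refine Measure.AbsolutelyContinuous.mk fun s hs h0 => ?_
    rw [hν] at h0
    simp only [Measure.coe_add, Pi.add_apply, Measure.smul_apply, smul_eq_mul, add_eq_zero,
      mul_eq_zero] at h0
    exact h0.1.resolve_left hA0
  have h0ν : ρ₀ ≪ ν := by
    refine Measure.AbsolutelyContinuous.mk fun s hs h0 => ?_
    rw [hν] at h0
    simp only [Measure.coe_add, Pi.add_apply, Measure.smul_apply, smul_eq_mul, add_eq_zero,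
      mul_eq_zero] at h0
    exact h0.2.resolve_left hB0
  have hνμ : ν ≪ μ := by
    rw [hν]; exact (h₁.smul_left A).add_left (h₀.smul_left B)
  refine ⟨hνμ, ?_⟩
  -- boundedness of rnDerivs of the components w.r.t. the mixture
  have hbd : ∀ (ρ : Measure Ω) (C : ℝ≥0∞), IsProbabilityMeasure ρ → C ≠ 0 → C ≠ ∞ →
      C • ρ ≤ ν → ∀ᵐ x ∂ν, (ρ.rnDeriv ν x).toReal ≤ C⁻¹.toReal := by
    intro ρ C _ hC0 hC' hle
    filter_upwards [Measure.rnDeriv_le_one_of_le hle,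
      Measure.rnDeriv_smul_left_of_ne_top ρ ν hC'] with x hx1 hx2
    have hmul : C * ρ.rnDeriv ν x ≤ 1 := by
      rw [← smul_eq_mul, ← Pi.smul_apply, ← hx2]; exact hx1
    have hinv : ρ.rnDeriv ν x ≤ C⁻¹ :=
      ENNReal.le_inv_iff_mul_le.mpr (by rwa [mul_comm])
    exact ENNReal.toReal_mono (by simp [hC0]) hinv
  have hle1 : A • ρ₁ ≤ ν := by rw [hν]; exact Measure.le_add_right le_rfl
  have hle0 : B • ρ₀ ≤ ν := by rw [hν]; exact Measure.le_add_left le_rfl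
  have hI1 : Integrable (llr ρ₁ ν) ρ₁ :=
    aux_integrable_llr_of_bounded h1ν (hbd ρ₁ A inferInstance hA0 hA' hle1)
  have hI0 : Integrable (llr ρ₀ ν) ρ₀ :=
    aux_integrable_llr_of_bounded h0ν (hbd ρ₀ B inferInstance hB0 hB' hle0)
  have hc1 : llr ρ₁ μ =ᵐ[ρ₁] fun x ↦ llr ρ₁ ν x + llr ν μ x := aux_llr_chain h1ν hνμ
  have hc0 : llr ρ₀ μ =ᵐ[ρ₀] fun x ↦ llr ρ₀ ν x + llr ν μ x := aux_llr_chain h0ν hνμ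
  have e1 : Integrable (llr ν μ) ρ₁ ↔ Integrable (llr ρ₁ μ) ρ₁ := by
    constructor
    · intro h; exact (hI1.add h).congr hc1.symm
    · intro h
      refine (h.sub hI1).congr ?_
      filter_upwards [hc1] with x hx
      simp only [Pi.sub_apply, hx]; ring
  have e0 : Integrable (llr ν μ) ρ₀ ↔ Integrable (llr ρ₀ μ) ρ₀ := by
    constructor
    · intro h; exact (hI0.add h).congr hc0.symm
    · intro h
      refine (h.sub hI0).congr ?_
      filter_upwards [hc0] with x hx
      simp only [Pi.sub_apply, hx]; ring
  have hsplit : ∀ f : Ω → ℝ, Integrable f ν ↔ (Integrable f ρ₁ ∧ Integrable f ρ₀) := by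
    intro f
    rw [hν, integrable_add_measure, integrable_smul_measure hA0 hA',
      integrable_smul_measure hB0 hB']
  have hint : ∀ f : Ω → ℝ, Integrable f ρ₁ → Integrable f ρ₀ →
      ∫ x, f x ∂ν = a * ∫ x, f x ∂ρ₁ + b * ∫ x, f x ∂ρ₀ := by
    intro f hf1 hf0
    rw [hν, integral_add_measure ((integrable_smul_measure hA0 hA').mpr hf1)
      ((integrable_smul_measure hB0 hB').mpr hf0), integral_smul_measure,
      integral_smul_measure, hA_def, hB_def, ENNReal.toReal_ofReal ha.le,
      ENNReal.toReal_ofReal hb.le, smul_eq_mul, smul_eq_mul]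
  have hKey : Integrable (llr ν μ) ν ↔
      (Integrable (llr ρ₁ μ) ρ₁ ∧ Integrable (llr ρ₀ μ) ρ₀) :=
    (hsplit (llr ν μ)).trans (and_congr e1 e0)
  by_cases hP : Integrable (llr ρ₁ μ) ρ₁ ∧ Integrable (llr ρ₀ μ) ρ₀
  · obtain ⟨hP1, hP0⟩ := hP
    have hIνρ1 : Integrable (llr ν μ) ρ₁ := e1.mpr hP1
    have hIνρ0 : Integrable (llr ν μ) ρ₀ := e0.mpr hP0
    have hIνν : Integrable (llr ν μ) ν := hKey.mpr ⟨hP1, hP0⟩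
    rw [klDiv, klDiv, klDiv, klDiv, klDiv, if_pos ⟨h₁, hP1⟩, if_pos ⟨h₀, hP0⟩,
      if_pos ⟨h1ν, hI1⟩, if_pos ⟨h0ν, hI0⟩, if_pos ⟨hνμ, hIνν⟩]
    have N1 : 0 ≤ ∫ x, llr ρ₁ μ x ∂ρ₁ := aux_integral_llr_nonneg h₁ hP1
    have N0 : 0 ≤ ∫ x, llr ρ₀ μ x ∂ρ₀ := aux_integral_llr_nonneg h₀ hP0
    have M1 : 0 ≤ ∫ x, llr ρ₁ ν x ∂ρ₁ := aux_integral_llr_nonneg h1ν hI1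
    have M0 : 0 ≤ ∫ x, llr ρ₀ ν x ∂ρ₀ := aux_integral_llr_nonneg h0ν hI0
    have NZ : 0 ≤ ∫ x, llr ν μ x ∂ν := aux_integral_llr_nonneg hνμ hIνν
    have iX1 : ∫ x, llr ρ₁ μ x ∂ρ₁ = ∫ x, llr ρ₁ ν x ∂ρ₁ + ∫ x, llr ν μ x ∂ρ₁ := by
      rw [integral_congr_ae hc1, integral_add hI1 hIνρ1]
    have iX0 : ∫ x, llr ρ₀ μ x ∂ρ₀ = ∫ x, llr ρ₀ ν x ∂ρ₀ + ∫ x, llr ν μ x ∂ρ₀ := by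
      rw [integral_congr_ae hc0, integral_add hI0 hIνρ0]
    have iZ : ∫ x, llr ν μ x ∂ν = a * ∫ x, llr ν μ x ∂ρ₁ + b * ∫ x, llr ν μ x ∂ρ₀ :=
      hint (llr ν μ) hIνρ1 hIνρ0
    rw [hA_def, hB_def, ← ENNReal.ofReal_mul ha.le, ← ENNReal.ofReal_mul hb.le,
      ← ENNReal.ofReal_mul ha.le, ← ENNReal.ofReal_mul hb.le,
      ← ENNReal.ofReal_add (mul_nonneg ha.le N1) (mul_nonneg hb.le N0),
      ← ENNReal.ofReal_add (mul_nonneg ha.le M1) (mul_nonneg hb.le M0),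
      ← ENNReal.ofReal_add (add_nonneg (mul_nonneg ha.le M1) (mul_nonneg hb.le M0)) NZ]
    congr 1
    rw [iX1, iX0, iZ]; ring
  · have hnint : ¬ Integrable (llr ν μ) ν := fun h => hP (hKey.mp h)
    have hklν : klDiv ν μ = ⊤ := by rw [klDiv, if_neg (fun h => hnint h.2)]
    rw [hklν, add_top]
    rcases not_and_or.mp hP with h | h
    · have : klDiv ρ₁ μ = ⊤ := by rw [klDiv, if_neg (fun hh => h hh.2)]
      rw [this, ENNReal.mul_top hA0, top_add]
    · have : klDiv ρ₀ μ = ⊤ := by rw [klDiv, if_neg (fun hh => h hh.2)]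
      rw [this, ENNReal.mul_top hB0, add_top]
end

section
/- Let ρ₁, ρ₀ be probability measures on a measurable space Ω and let a, b > 0 be real numbers, and set ν := (a/(a+b))•ρ₁ + (b/(a+b))•ρ₀. Then the right-hand side a·KL(ρ₁‖ν) + b·KL(ρ₀‖ν) is finite (indeed bounded by (a+b)·log((a+b)/min(a,b))), and for a probability measure μ on Ω, equality a·KL(ρ₁‖μ) + b·KL(ρ₀‖μ) = a·KL(ρ₁‖ν) + b·KL(ρ₀‖ν) holds if and only if μ = ν. In particular the mixture ν is the unique minimizer of μ ↦ a·KL(ρ₁‖μ) + b·KL(ρ₀‖μ) over probability measures μ on Ω. -/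
open MeasureTheory ENNReal Classical

lemma aux_phi_nonneg {x : ℝ} (hx : 0 ≤ x) : 0 ≤ x * Real.log x - x + 1 := by
  rcases eq_or_lt_of_le hx with h | h
  · simp [← h]
  · have h1 := Real.log_le_sub_one_of_pos (show 0 < x⁻¹ by positivity)
    rw [Real.log_inv] at h1
    have h2 := mul_le_mul_of_nonneg_left h1 hx
    have h3 : x * x⁻¹ = 1 := mul_inv_cancel₀ h.ne'
    nlinarith

lemma aux_phi_eq {x : ℝ} (hx : 0 ≤ x) (h : x * Real.log x - x + 1 = 0) : x = 1 := by
  rcases eq_or_lt_of_le hx with h0 | h0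
  · exfalso; rw [← h0] at h; norm_num at h
  · by_contra hne
    have h1 := Real.log_lt_sub_one_of_pos (show 0 < x⁻¹ by positivity)
      (by simpa using inv_ne_one.mpr hne)
    rw [Real.log_inv] at h1
    have h2 := mul_lt_mul_of_pos_left h1 h0
    have h3 : x * x⁻¹ = 1 := mul_inv_cancel₀ h0.ne'
    nlinarith

lemma gibbs_aux {Ω : Type*} [MeasurableSpace Ω] (μ ν : Measure Ω)
    [IsProbabilityMeasure μ] [IsProbabilityMeasure ν]
    (h : μ ≪ ν) (hi : Integrable (llr μ ν) μ) :
    0 ≤ ∫ x, llr μ ν x ∂μ ∧ ((∫ x, llr μ ν x ∂μ) = 0 → μ = ν) := by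
  set f : Ω → ℝ := fun x => (μ.rnDeriv ν x).toReal with hfdef
  have hmf : Measurable f := (Measure.measurable_rnDeriv μ ν).ennreal_toReal
  have hint_f : Integrable f ν := Measure.integrable_toReal_rnDeriv
  have key : ∫ x, llr μ ν x ∂μ = ∫ x, f x * Real.log (f x) ∂ν := by
    rw [← integral_rnDeriv_smul h (f := llr μ ν)]
    simp [llr, smul_eq_mul, hfdef]
  have hint_flogf : Integrable (fun x => f x * Real.log (f x)) ν := by
    have := (integrable_rnDeriv_smul_iff h (f := llr μ ν)).mpr hi
    simpa [llr, smul_eq_mul, hfdef] using this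
  have hint_sub : Integrable (fun x => f x * Real.log (f x) - f x) ν := by
    exact hint_flogf.sub hint_f
  have hint_phi : Integrable (fun x => f x * Real.log (f x) - f x + 1) ν := by
    exact hint_sub.add (integrable_const 1)
  have hf_nonneg : ∀ x, 0 ≤ f x := fun x => ENNReal.toReal_nonneg
  have hphi_nonneg : ∀ x, 0 ≤ f x * Real.log (f x) - f x + 1 :=
    fun x => aux_phi_nonneg (hf_nonneg x)
  have hintf : ∫ x, f x ∂ν = 1 := by
    rw [hfdef, Measure.integral_toReal_rnDeriv h]; simp
  have hsum : ∫ x, (f x * Real.log (f x) - f x + 1) ∂ν = ∫ x, llr μ ν x ∂μ := by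
    calc ∫ x, (f x * Real.log (f x) - f x + 1) ∂ν
        = (∫ x, (f x * Real.log (f x) - f x) ∂ν) + ∫ _, (1 : ℝ) ∂ν :=
          integral_add hint_sub (integrable_const 1)
      _ = ((∫ x, f x * Real.log (f x) ∂ν) - ∫ x, f x ∂ν) + ∫ _, (1 : ℝ) ∂ν := by
          rw [integral_sub hint_flogf hint_f]
      _ = ∫ x, llr μ ν x ∂μ := by rw [hintf, key]; simp
  constructor
  · rw [← hsum]
    exact integral_nonneg hphi_nonneg
  · intro h0
    have hz : (fun x => f x * Real.log (f x) - f x + 1) =ᵐ[ν] 0 := by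
      rw [← integral_eq_zero_iff_of_nonneg_ae (Filter.Eventually.of_forall hphi_nonneg) hint_phi,
        hsum]
      exact h0
    have hf1 : ∀ᵐ x ∂ν, f x = 1 := by
      filter_upwards [hz] with x hx
      exact aux_phi_eq (hf_nonneg x) hx
    have hrn1 : μ.rnDeriv ν =ᵐ[ν] 1 := by
      filter_upwards [hf1, Measure.rnDeriv_lt_top μ ν] with x hx hlt
      have : (μ.rnDeriv ν x).toReal = (1 : ℝ≥0∞).toReal := by simpa using hx
      exact (ENNReal.toReal_eq_toReal_iff' hlt.ne one_ne_top).mp this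
    calc μ = ν.withDensity (μ.rnDeriv ν) := (Measure.withDensity_rnDeriv_eq μ ν h).symm
    _ = ν.withDensity 1 := withDensity_congr_ae hrn1
    _ = ν := by simp

lemma ac_of_smul_le {Ω : Type*} [MeasurableSpace Ω] {μ ν : Measure Ω} {r : ℝ≥0∞}
    (hr : r ≠ 0) (h : r • μ ≤ ν) : μ ≪ ν := by
  refine Measure.AbsolutelyContinuous.mk fun s hs hνs => ?_
  have h1 : (r • μ) s ≤ ν s := h s
  rw [hνs] at h1
  simp only [Measure.smul_apply, smul_eq_mul, nonpos_iff_eq_zero, mul_eq_zero] at h1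
  exact h1.resolve_left hr


lemma aux_phi_nonneg' {x : ℝ} (hx : 0 ≤ x) : 0 ≤ x * Real.log x - x + 1 := by
  rcases eq_or_lt_of_le hx with h | h
  · simp [← h]
  · have h1 := Real.log_le_sub_one_of_pos (show 0 < x⁻¹ by positivity)
    rw [Real.log_inv] at h1
    have h2 := mul_le_mul_of_nonneg_left h1 hx
    have h3 : x * x⁻¹ = 1 := mul_inv_cancel₀ h.ne'
    nlinarith

lemma aux_xlogx_bound {x C : ℝ} (hx : 0 ≤ x) (hC : 1 ≤ C) (hxC : x ≤ C) :
    |x * Real.log x| ≤ 1 + C * |Real.log C| := by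
  have hC0 : (0:ℝ) < C := lt_of_lt_of_le one_pos hC
  have hlogC : 0 ≤ Real.log C := Real.log_nonneg hC
  rcases le_or_gt x 1 with h1 | h1
  · have hlog : Real.log x ≤ 0 := by
      rcases eq_or_lt_of_le hx with h0 | h0
      · simp [← h0]
      · exact Real.log_nonpos hx h1
    have : x * Real.log x ≤ 0 := mul_nonpos_of_nonneg_of_nonpos hx hlog
    rw [abs_of_nonpos this]
    have := aux_phi_nonneg' hx
    nlinarith [abs_nonneg (Real.log C)]
  · have hx1 : (0:ℝ) < x := lt_trans one_pos h1
    have hlog : 0 ≤ Real.log x := Real.log_nonneg h1.le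
    rw [abs_of_nonneg (mul_nonneg hx hlog)]
    have hlogle : Real.log x ≤ Real.log C := Real.log_le_log hx1 hxC
    have : x * Real.log x ≤ C * Real.log C :=
      mul_le_mul hxC hlogle hlog hC0.le
    rw [abs_of_nonneg hlogC]
    linarith

lemma bdd_llr {Ω : Type*} [MeasurableSpace Ω] {ρ ν : Measure Ω}
    [IsProbabilityMeasure ρ] [IsProbabilityMeasure ν]
    (hρν : ρ ≪ ν) {C : ℝ} (hC : 1 ≤ C)
    (hbd : ρ.rnDeriv ν ≤ᵐ[ν] fun _ => ENNReal.ofReal C) :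
    Integrable (llr ρ ν) ρ ∧ ∫ x, llr ρ ν x ∂ρ ≤ Real.log C := by
  set f : Ω → ℝ := fun x => (ρ.rnDeriv ν x).toReal with hfdef
  have hmf : Measurable f := (Measure.measurable_rnDeriv ρ ν).ennreal_toReal
  have hfC : ∀ᵐ x ∂ν, f x ≤ C := by
    filter_upwards [hbd] with x hx
    calc f x ≤ (ENNReal.ofReal C).toReal := ENNReal.toReal_mono ofReal_ne_top hx
    _ = C := ENNReal.toReal_ofReal (by linarith)
  have hint_flogf : Integrable (fun x => f x * Real.log (f x)) ν := by
    refine (integrable_const (1 + C * |Real.log C|)).mono'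
      ((hmf.mul (Real.measurable_log.comp hmf)).aestronglyMeasurable) ?_
    filter_upwards [hfC] with x hx
    rw [Real.norm_eq_abs]
    exact aux_xlogx_bound ENNReal.toReal_nonneg hC hx
  have hint : Integrable (llr ρ ν) ρ := by
    refine (integrable_rnDeriv_smul_iff hρν (f := llr ρ ν)).mp ?_
    simpa [llr, smul_eq_mul, hfdef] using hint_flogf
  refine ⟨hint, ?_⟩
  have hbd' : ∀ᵐ x ∂ρ, llr ρ ν x ≤ Real.log C := by
    have hfCρ : ∀ᵐ x ∂ρ, f x ≤ C := hfC.filter_mono hρν.ae_le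
    filter_upwards [hfCρ] with x hx
    rcases eq_or_lt_of_le (ENNReal.toReal_nonneg : 0 ≤ f x) with h0 | h0
    · simp only [llr, ← h0]
      simpa using Real.log_nonneg hC
    · exact Real.log_le_log h0 hx
  calc ∫ x, llr ρ ν x ∂ρ ≤ ∫ _, Real.log C ∂ρ :=
        integral_mono_ae hint (integrable_const _) hbd'
  _ = Real.log C := by simp

lemma llr_chain {Ω : Type*} [MeasurableSpace Ω] {ρ ν μ : Measure Ω}
    [SigmaFinite ρ] [SigmaFinite ν] [SigmaFinite μ]
    (hρν : ρ ≪ ν) (hνμ : ν ≪ μ) :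
    llr ρ μ =ᵐ[ρ] fun x => llr ρ ν x + llr ν μ x := by
  have hρμ : ρ ≪ μ := hρν.trans hνμ
  have h2 : ρ.rnDeriv ν * ν.rnDeriv μ =ᵐ[ρ] ρ.rnDeriv μ :=
    (Measure.rnDeriv_mul_rnDeriv hρν).filter_mono hρμ.ae_le
  have h3 : ∀ᵐ x ∂ρ, 0 < ρ.rnDeriv ν x := Measure.rnDeriv_pos hρν
  have h4 : ∀ᵐ x ∂ρ, ρ.rnDeriv ν x < ⊤ :=
    (Measure.rnDeriv_lt_top ρ ν).filter_mono hρν.ae_le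
  have h5 : ∀ᵐ x ∂ρ, 0 < ν.rnDeriv μ x :=
    (Measure.rnDeriv_pos hνμ).filter_mono hρν.ae_le
  have h6 : ∀ᵐ x ∂ρ, ν.rnDeriv μ x < ⊤ :=
    (Measure.rnDeriv_lt_top ν μ).filter_mono hρμ.ae_le
  filter_upwards [h2, h3, h4, h5, h6] with x h2 h3 h4 h5 h6
  simp only [llr]
  rw [← h2, Pi.mul_apply, ENNReal.toReal_mul, Real.log_mul]
  · exact ENNReal.toReal_ne_zero.mpr ⟨h3.ne', h4.ne⟩
  · exact ENNReal.toReal_ne_zero.mpr ⟨h5.ne', h6.ne⟩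

lemma rnDeriv_bound_of_smul_le {Ω : Type*} [MeasurableSpace Ω] {ρ ν : Measure Ω}
    [IsProbabilityMeasure ρ] [SigmaFinite ν] {u : ℝ} (hu : 0 < u)
    (h : ENNReal.ofReal u • ρ ≤ ν) :
    ρ.rnDeriv ν ≤ᵐ[ν] fun _ => ENNReal.ofReal u⁻¹ := by
  have h1 := Measure.rnDeriv_le_one_of_le h
  have h2 := Measure.rnDeriv_smul_left_of_ne_top ρ ν (r := ENNReal.ofReal u) ofReal_ne_top
  filter_upwards [h1, h2] with x h1 h2
  rw [h2] at h1
  simp only [Pi.smul_apply, smul_eq_mul, Pi.one_apply] at h1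
  rw [ENNReal.ofReal_inv_of_pos hu, ENNReal.le_inv_iff_mul_le, mul_comm]
  exact h1


/-- **Uniqueness of the KL mixture minimizer.** For probability measures `ρ₁, ρ₀`, weights
`a, b > 0`, and the mixture `ν := (a/(a+b))•ρ₁ + (b/(a+b))•ρ₀`:
the value `a·KL(ρ₁‖ν) + b·KL(ρ₀‖ν)` is finite — indeed bounded by
`(a+b)·log((a+b)/min(a,b))` — and for every probability measure `μ`, equality
`a·KL(ρ₁‖μ) + b·KL(ρ₀‖μ) = a·KL(ρ₁‖ν) + b·KL(ρ₀‖ν)` holds if and only if `μ = ν`.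
In particular `ν` is the unique minimizer of `μ ↦ a·KL(ρ₁‖μ) + b·KL(ρ₀‖μ)` over
probability measures. -/
theorem kl_mixture_unique_minimizer {Ω : Type*} [MeasurableSpace Ω]
    (ρ₁ ρ₀ : Measure Ω) [IsProbabilityMeasure ρ₁] [IsProbabilityMeasure ρ₀]
    (a b : ℝ) (ha : 0 < a) (hb : 0 < b)
    (ν : Measure Ω)
    (hν : ν = ENNReal.ofReal (a / (a + b)) • ρ₁ + ENNReal.ofReal (b / (a + b)) • ρ₀) :
    (ENNReal.ofReal a * klDiv ρ₁ ν + ENNReal.ofReal b * klDiv ρ₀ ν ≤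
        ENNReal.ofReal ((a + b) * Real.log ((a + b) / min a b))) ∧
      ∀ (μ : Measure Ω), IsProbabilityMeasure μ →
        (ENNReal.ofReal a * klDiv ρ₁ μ + ENNReal.ofReal b * klDiv ρ₀ μ =
            ENNReal.ofReal a * klDiv ρ₁ ν + ENNReal.ofReal b * klDiv ρ₀ ν ↔ μ = ν) := by
  have hc : (0:ℝ) < a + b := by linarith
  have hta : (0:ℝ) < a / (a + b) := by positivity
  have htb : (0:ℝ) < b / (a + b) := by positivity
  have ht0 : ENNReal.ofReal (a / (a + b)) ≠ 0 := by
    simp only [ne_eq, ENNReal.ofReal_eq_zero, not_le]; exact hta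
  have hs0 : ENNReal.ofReal (b / (a + b)) ≠ 0 := by
    simp only [ne_eq, ENNReal.ofReal_eq_zero, not_le]; exact htb
  haveI hνprob : IsProbabilityMeasure ν := by
    constructor
    rw [hν]
    simp only [Measure.add_apply, Measure.smul_apply, smul_eq_mul, measure_univ, mul_one]
    rw [← ENNReal.ofReal_add hta.le htb.le, ← add_div, div_self hc.ne']
    simp
  have hle1 : ENNReal.ofReal (a / (a + b)) • ρ₁ ≤ ν := hν ▸ Measure.le_add_right le_rfl
  have hle0 : ENNReal.ofReal (b / (a + b)) • ρ₀ ≤ ν := hν ▸ Measure.le_add_left le_rfl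
  have hρ₁ν : ρ₁ ≪ ν := ac_of_smul_le ht0 hle1
  have hρ₀ν : ρ₀ ≪ ν := ac_of_smul_le hs0 hle0
  have hC₁ : (1:ℝ) ≤ (a + b) / a := (one_le_div ha).mpr (by linarith)
  have hC₀ : (1:ℝ) ≤ (a + b) / b := (one_le_div hb).mpr (by linarith)
  have hbd1 : ρ₁.rnDeriv ν ≤ᵐ[ν] fun _ => ENNReal.ofReal ((a + b) / a) := by
    have := rnDeriv_bound_of_smul_le hta hle1
    rwa [inv_div] at this
  have hbd0 : ρ₀.rnDeriv ν ≤ᵐ[ν] fun _ => ENNReal.ofReal ((a + b) / b) := by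
    have := rnDeriv_bound_of_smul_le htb hle0
    rwa [inv_div] at this
  obtain ⟨hint₁, hIb₁⟩ := bdd_llr hρ₁ν hC₁ hbd1
  obtain ⟨hint₀, hIb₀⟩ := bdd_llr hρ₀ν hC₀ hbd0
  set I₁ := ∫ x, llr ρ₁ ν x ∂ρ₁ with hI₁def
  set I₀ := ∫ x, llr ρ₀ ν x ∂ρ₀ with hI₀def
  have hg₁ : 0 ≤ I₁ := (gibbs_aux ρ₁ ν hρ₁ν hint₁).1
  have hg₀ : 0 ≤ I₀ := (gibbs_aux ρ₀ ν hρ₀ν hint₀).1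
  have hK₁ : klDiv ρ₁ ν = ENNReal.ofReal I₁ := by rw [klDiv, if_pos ⟨hρ₁ν, hint₁⟩]
  have hK₀ : klDiv ρ₀ ν = ENNReal.ofReal I₀ := by rw [klDiv, if_pos ⟨hρ₀ν, hint₀⟩]
  have hRHS : ENNReal.ofReal a * klDiv ρ₁ ν + ENNReal.ofReal b * klDiv ρ₀ ν
      = ENNReal.ofReal (a * I₁ + b * I₀) := by
    rw [hK₁, hK₀, ← ENNReal.ofReal_mul ha.le, ← ENNReal.ofReal_mul hb.le,
      ← ENNReal.ofReal_add (mul_nonneg ha.le hg₁) (mul_nonneg hb.le hg₀)]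
  -- the log bounds
  have hmin : (0:ℝ) < min a b := lt_min ha hb
  have hM₁ : Real.log ((a + b) / a) ≤ Real.log ((a + b) / min a b) := by
    apply Real.log_le_log (by positivity)
    gcongr
    exact min_le_left a b
  have hM₀ : Real.log ((a + b) / b) ≤ Real.log ((a + b) / min a b) := by
    apply Real.log_le_log (by positivity)
    gcongr
    exact min_le_right a b
  constructor
  · rw [hRHS]
    apply ENNReal.ofReal_le_ofReal
    have h1 : I₁ ≤ Real.log ((a + b) / min a b) := hIb₁.trans hM₁
    have h0 : I₀ ≤ Real.log ((a + b) / min a b) := hIb₀.trans hM₀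
    nlinarith
  · intro μ hμprob
    constructor
    · intro hEq
      rw [hRHS] at hEq
      have hta0 : ENNReal.ofReal a ≠ 0 := by
        simp only [ne_eq, ENNReal.ofReal_eq_zero, not_le]; exact ha
      have htb0 : ENNReal.ofReal b ≠ 0 := by
        simp only [ne_eq, ENNReal.ofReal_eq_zero, not_le]; exact hb
      have h₁fin : klDiv ρ₁ μ ≠ ⊤ := by
        intro h
        rw [h, ENNReal.mul_top hta0] at hEq
        simp at hEq
      have h₀fin : klDiv ρ₀ μ ≠ ⊤ := by
        intro h
        rw [h, ENNReal.mul_top htb0] at hEq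
        simp at hEq
      have hcond₁ : ρ₁ ≪ μ ∧ Integrable (llr ρ₁ μ) ρ₁ := by
        by_contra hcnd; exact h₁fin (by rw [klDiv, if_neg hcnd])
      have hcond₀ : ρ₀ ≪ μ ∧ Integrable (llr ρ₀ μ) ρ₀ := by
        by_contra hcnd; exact h₀fin (by rw [klDiv, if_neg hcnd])
      obtain ⟨hac₁, hi₁⟩ := hcond₁
      obtain ⟨hac₀, hi₀⟩ := hcond₀
      have hνμ : ν ≪ μ := by
        rw [hν]
        refine Measure.AbsolutelyContinuous.mk fun S hS hμS => ?_
        simp [Measure.add_apply, Measure.smul_apply, hac₁ hμS, hac₀ hμS]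
      have chain₁ : llr ρ₁ μ =ᵐ[ρ₁] fun x => llr ρ₁ ν x + llr ν μ x := llr_chain hρ₁ν hνμ
      have chain₀ : llr ρ₀ μ =ᵐ[ρ₀] fun x => llr ρ₀ ν x + llr ν μ x := llr_chain hρ₀ν hνμ
      have hiν₁ : Integrable (llr ν μ) ρ₁ := by
        have h1 : Integrable (fun x => llr ρ₁ ν x + llr ν μ x) ρ₁ := hi₁.congr chain₁
        have h2 : Integrable (fun x => (llr ρ₁ ν x + llr ν μ x) - llr ρ₁ ν x) ρ₁ :=
          h1.sub hint₁
        simpa using h2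
      have hiν₀ : Integrable (llr ν μ) ρ₀ := by
        have h1 : Integrable (fun x => llr ρ₀ ν x + llr ν μ x) ρ₀ := hi₀.congr chain₀
        have h2 : Integrable (fun x => (llr ρ₀ ν x + llr ν μ x) - llr ρ₀ ν x) ρ₀ :=
          h1.sub hint₀
        simpa using h2
      have hiνν : Integrable (llr ν μ) ν := by
        have h2 : Integrable (llr ν μ)
            (ENNReal.ofReal (a / (a + b)) • ρ₁ + ENNReal.ofReal (b / (a + b)) • ρ₀) :=
          (hiν₁.smul_measure ofReal_ne_top).add_measure (hiν₀.smul_measure ofReal_ne_top)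
        rwa [← hν] at h2
      set J₁ := ∫ x, llr ν μ x ∂ρ₁ with hJ₁def
      set J₀ := ∫ x, llr ν μ x ∂ρ₀ with hJ₀def
      have hJ : ∫ x, llr ν μ x ∂ν = (a / (a + b)) * J₁ + (b / (a + b)) * J₀ := by
        calc ∫ x, llr ν μ x ∂ν
            = ∫ x, llr ν μ x
                ∂(ENNReal.ofReal (a / (a + b)) • ρ₁ + ENNReal.ofReal (b / (a + b)) • ρ₀) := by
              rw [← hν]
          _ = (a / (a + b)) * J₁ + (b / (a + b)) * J₀ := by
              rw [integral_add_measure (hiν₁.smul_measure ofReal_ne_top)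
                (hiν₀.smul_measure ofReal_ne_top), integral_smul_measure, integral_smul_measure,
                ENNReal.toReal_ofReal hta.le, ENNReal.toReal_ofReal htb.le]
              simp [smul_eq_mul]
              rfl
      have hI₁μ : ∫ x, llr ρ₁ μ x ∂ρ₁ = I₁ + J₁ := by
        rw [integral_congr_ae chain₁, integral_add hint₁ hiν₁]
      have hI₀μ : ∫ x, llr ρ₀ μ x ∂ρ₀ = I₀ + J₀ := by
        rw [integral_congr_ae chain₀, integral_add hint₀ hiν₀]
      have hgμ₁ : 0 ≤ I₁ + J₁ := hI₁μ ▸ (gibbs_aux ρ₁ μ hac₁ hi₁).1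
      have hgμ₀ : 0 ≤ I₀ + J₀ := hI₀μ ▸ (gibbs_aux ρ₀ μ hac₀ hi₀).1
      have hKμ₁ : klDiv ρ₁ μ = ENNReal.ofReal (I₁ + J₁) := by
        rw [klDiv, if_pos ⟨hac₁, hi₁⟩, hI₁μ]
      have hKμ₀ : klDiv ρ₀ μ = ENNReal.ofReal (I₀ + J₀) := by
        rw [klDiv, if_pos ⟨hac₀, hi₀⟩, hI₀μ]
      rw [hKμ₁, hKμ₀, ← ENNReal.ofReal_mul ha.le, ← ENNReal.ofReal_mul hb.le,
        ← ENNReal.ofReal_add (mul_nonneg ha.le hgμ₁) (mul_nonneg hb.le hgμ₀)] at hEq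
      have hEq' : a * (I₁ + J₁) + b * (I₀ + J₀) = a * I₁ + b * I₀ :=
        (ENNReal.ofReal_eq_ofReal_iff
          (by positivity) (by positivity)).mp hEq
      have hJ0 : a * J₁ + b * J₀ = 0 := by nlinarith [hEq']
      have hJint : ∫ x, llr ν μ x ∂ν = 0 := by
        rw [hJ, div_mul_eq_mul_div, div_mul_eq_mul_div, ← add_div, hJ0, zero_div]
      exact ((gibbs_aux ν μ hνμ hiνν).2 hJint).symm
    · rintro rfl; rfl
end

section
/- Let X be a measurable space and Ω a measurable space whose σ-algebra is countably generated. Let P and Q be finite measures on X, let ρ₁, ρ₀ be probability measures on Ω, let f : X → [0,1] be a measurable Radon–Nikodym derivative of P with respect to P + Q, and define the Markov kernel κ*(x) := f(x)•ρ₁ + (1−f(x))•ρ₀. Then for a Markov kernel κ from X to Ω, equality ∫⁻ KL(ρ₁‖κ(x)) dP(x) + ∫⁻ KL(ρ₀‖κ(x)) dQ(x) = ∫⁻ KL(ρ₁‖κ*(x)) dP(x) + ∫⁻ KL(ρ₀‖κ*(x)) dQ(x) holds if and only if κ(x) = κ*(x) for (P+Q)-almost every x. -/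
open MeasureTheory ENNReal Classical ProbabilityTheory

/-- The (Markov kernel) map `κ* : x ↦ f(x)•ρ₁ + (1−f(x))•ρ₀`, where `f` is a `[0,1]`-valued
Radon–Nikodym derivative of `P` with respect to `P + Q`. -/
noncomputable def kstar {X Ω : Type*} [MeasurableSpace X] [MeasurableSpace Ω]
    (ρ₁ ρ₀ : Measure Ω) (f : X → ℝ) : X → Measure Ω := fun x =>
  ENNReal.ofReal (f x) • ρ₁ + ENNReal.ofReal (1 - f x) • ρ₀

section GibbsAux

variable {Ω : Type*} [MeasurableSpace Ω]

lemma integrable_exp_neg_llr {μ ν : Measure Ω} [IsFiniteMeasure μ] [IsFiniteMeasure ν]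
    (hμν : μ ≪ ν) : Integrable (fun ω => Real.exp (-llr μ ν ω)) μ :=
  (Measure.integrable_toReal_rnDeriv).congr (exp_neg_llr hμν).symm

lemma integral_exp_neg_llr_le {μ ν : Measure Ω} [IsFiniteMeasure μ] [IsFiniteMeasure ν]
    (hμν : μ ≪ ν) : ∫ ω, Real.exp (-llr μ ν ω) ∂μ ≤ (ν Set.univ).toReal := by
  rw [integral_congr_ae (exp_neg_llr hμν)]
  rw [Measure.integral_toReal_rnDeriv']
  have h0 : 0 ≤ (ν.singularPart μ Set.univ).toReal := ENNReal.toReal_nonneg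
  have h1 : ν.real Set.univ = (ν Set.univ).toReal := rfl
  have h2 : (ν.singularPart μ).real Set.univ = (ν.singularPart μ Set.univ).toReal := rfl
  linarith

lemma integral_llr_nonneg {μ ν : Measure Ω} [IsProbabilityMeasure μ] [IsProbabilityMeasure ν]
    (hμν : μ ≪ ν) (h : Integrable (llr μ ν) μ) : 0 ≤ ∫ ω, llr μ ν ω ∂μ := by
  have hJ : Real.exp (⨍ ω, -llr μ ν ω ∂μ) ≤ ⨍ ω, Real.exp (-llr μ ν ω) ∂μ := by
    refine convexOn_exp.map_average_le Real.continuous_exp.continuousOn isClosed_univ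
      (Filter.Eventually.of_forall fun _ => Set.mem_univ _) h.neg ?_
    exact integrable_exp_neg_llr hμν
  rw [average_eq_integral, average_eq_integral] at hJ
  have h2 : ∫ ω, Real.exp (-llr μ ν ω) ∂μ ≤ 1 := by
    have := integral_exp_neg_llr_le hμν
    simpa using this
  rw [integral_neg] at hJ
  have h3 : Real.exp (-∫ ω, llr μ ν ω ∂μ) ≤ 1 := hJ.trans h2
  have h4 := Real.exp_le_exp.mp (by simpa using h3)
  linarith

lemma eq_of_integral_llr_eq_zero {μ ν : Measure Ω} [IsProbabilityMeasure μ] [IsProbabilityMeasure ν]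
    (hμν : μ ≪ ν) (h : Integrable (llr μ ν) μ) (h0 : ∫ ω, llr μ ν ω ∂μ = 0) : μ = ν := by
  have h2 : ∫ ω, Real.exp (-llr μ ν ω) ∂μ ≤ 1 := by
    have := integral_exp_neg_llr_le hμν
    simpa using this
  have hJ := strictConvexOn_exp.ae_eq_const_or_map_average_lt
    Real.continuous_exp.continuousOn isClosed_univ
    (Filter.Eventually.of_forall fun (ω : Ω) => Set.mem_univ ((-llr μ ν) ω)) h.neg
    (by exact integrable_exp_neg_llr hμν)
  have havg : (⨍ ω, (-llr μ ν) ω ∂μ) = 0 := by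
    simp only [Pi.neg_apply]
    rw [average_eq_integral, integral_neg, h0, neg_zero]
  rcases hJ with hconst | hlt
  · rw [havg] at hconst
    have hllr0 : ∀ᵐ ω ∂μ, llr μ ν ω = 0 := by
      filter_upwards [hconst] with ω hω
      have : -llr μ ν ω = 0 := hω
      linarith
    have hrn1 : ∀ᵐ ω ∂μ, μ.rnDeriv ν ω = 1 := by
      filter_upwards [hllr0, Measure.rnDeriv_pos hμν, hμν.ae_le (Measure.rnDeriv_lt_top μ ν)]
        with ω h1 h2 h3
      have hpos : 0 < (μ.rnDeriv ν ω).toReal := ENNReal.toReal_pos h2.ne' h3.ne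
      have hlog : Real.log (μ.rnDeriv ν ω).toReal = 0 := h1
      have htr : (μ.rnDeriv ν ω).toReal = 1 := by
        rcases Real.log_eq_zero.mp hlog with h | h | h
        · exact absurd h hpos.ne'
        · exact h
        · linarith
      have := (ENNReal.toReal_eq_one_iff _).mp htr
      simpa using this
    set A : Set Ω := {ω | μ.rnDeriv ν ω = 1} with hA
    have hAm : MeasurableSet A := (Measure.measurable_rnDeriv μ ν) (measurableSet_singleton 1)
    have hμAc : μ Aᶜ = 0 := by
      have : μ {ω | ¬ (∂μ/∂ν) ω = 1} = 0 := ae_iff.mp hrn1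
      simpa [A, Set.compl_setOf] using this
    have hμA : μ A = 1 := by
      have hcompl := measure_add_measure_compl (μ := μ) hAm
      rw [hμAc, add_zero, measure_univ] at hcompl
      exact hcompl
    have hνA : ν A = μ A := by
      rw [← Measure.setLIntegral_rnDeriv hμν A]
      rw [setLIntegral_congr_fun hAm (g := fun _ => 1) (fun ω hω => hω)]
      simp
    have hνAc : ν Aᶜ = 0 := by
      have hcompl := measure_add_measure_compl (μ := ν) hAm
      rw [hνA, hμA, measure_univ] at hcompl
      have : (1 : ℝ≥0∞) + ν Aᶜ = 1 + 0 := by simpa using hcompl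
      exact (ENNReal.add_right_inj (by simp)).mp this
    have hrn1ν : μ.rnDeriv ν =ᵐ[ν] 1 := by
      rw [Filter.EventuallyEq, ae_iff]
      simpa [A, Set.compl_setOf] using hνAc
    calc μ = ν.withDensity (μ.rnDeriv ν) := (Measure.withDensity_rnDeriv_eq μ ν hμν).symm
      _ = ν.withDensity 1 := withDensity_congr_ae hrn1ν
      _ = ν := withDensity_one
  · rw [havg, Real.exp_zero, average_eq_integral] at hlt
    simp only [Pi.neg_apply] at hlt
    linarith

lemma llr_self_ae (μ : Measure Ω) [SigmaFinite μ] : llr μ μ =ᵐ[μ] 0 := by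
  filter_upwards [Measure.rnDeriv_self μ] with ω hω
  simp [llr, hω]

lemma klDiv_self (μ : Measure Ω) [SigmaFinite μ] : klDiv μ μ = 0 := by
  have hint : Integrable (llr μ μ) μ := (integrable_zero _ _ _).congr (llr_self_ae μ).symm
  rw [klDiv, if_pos ⟨Measure.AbsolutelyContinuous.rfl, hint⟩]
  rw [integral_congr_ae (llr_self_ae μ)]
  simp

lemma klDiv_eq_zero_iff {μ ν : Measure Ω} [IsProbabilityMeasure μ] [IsProbabilityMeasure ν] :
    klDiv μ ν = 0 ↔ μ = ν := by
  constructor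
  · intro h
    rw [klDiv] at h
    split_ifs at h with hc
    · obtain ⟨hac, hint⟩ := hc
      refine eq_of_integral_llr_eq_zero hac hint ?_
      have h1 : ∫ ω, llr μ ν ω ∂μ ≤ 0 := by
        by_contra hpos
        push_neg at hpos
        exact (ENNReal.ofReal_pos.mpr hpos).ne' h
      exact le_antisymm h1 (integral_llr_nonneg hac hint)
    · exact absurd h (by simp)
  · rintro rfl
    exact klDiv_self μ

lemma integrable_llr_of_ae_le {μ ν : Measure Ω} [IsProbabilityMeasure μ] [IsProbabilityMeasure ν]
    (hμν : μ ≪ ν) {C : ℝ} (hC : ∀ᵐ ω ∂μ, llr μ ν ω ≤ C) : Integrable (llr μ ν) μ := by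
  refine Integrable.mono' ((integrable_const (max C 0)).add
      (Measure.integrable_toReal_rnDeriv (μ := ν) (ν := μ)))
    (measurable_llr μ ν).aestronglyMeasurable ?_
  filter_upwards [hC, exp_neg_llr hμν] with ω h1 h2
  simp only [Pi.add_apply, Real.norm_eq_abs]
  rcases le_or_gt 0 (llr μ ν ω) with h3 | h3
  · rw [abs_of_nonneg h3]
    have : (0:ℝ) ≤ (ν.rnDeriv μ ω).toReal := ENNReal.toReal_nonneg
    calc llr μ ν ω ≤ C := h1
      _ ≤ max C 0 := le_max_left _ _
      _ ≤ _ := by linarith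
  · rw [abs_of_neg h3]
    have h4 : -llr μ ν ω ≤ Real.exp (-llr μ ν ω) := by
      have := Real.add_one_le_exp (-llr μ ν ω); linarith
    rw [h2] at h4
    have : (0:ℝ) ≤ max C 0 := le_max_right _ _
    linarith

lemma klDiv_le_ofReal {μ ν : Measure Ω} [IsProbabilityMeasure μ] [IsProbabilityMeasure ν]
    (hμν : μ ≪ ν) {C : ℝ} (hC : ∀ᵐ ω ∂μ, llr μ ν ω ≤ C) : klDiv μ ν ≤ ENNReal.ofReal C := by
  have hint := integrable_llr_of_ae_le hμν hC
  rw [klDiv, if_pos ⟨hμν, hint⟩]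
  refine ENNReal.ofReal_le_ofReal ?_
  calc ∫ ω, llr μ ν ω ∂μ ≤ ∫ _, C ∂μ := integral_mono_ae hint (integrable_const C) hC
    _ = C := by simp

end GibbsAux

section MixAux

variable {Ω : Type*} [MeasurableSpace Ω]

lemma isProbabilityMeasure_mix {ρ₁ ρ₀ : Measure Ω} [IsProbabilityMeasure ρ₁]
    [IsProbabilityMeasure ρ₀] {t : ℝ} (ht0 : 0 ≤ t) (ht1 : t ≤ 1) :
    IsProbabilityMeasure (ENNReal.ofReal t • ρ₁ + ENNReal.ofReal (1 - t) • ρ₀) := by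
  constructor
  simp only [Measure.coe_add, Pi.add_apply, Measure.smul_apply, smul_eq_mul, measure_univ,
    mul_one]
  rw [← ENNReal.ofReal_add ht0 (by linarith)]
  simp

lemma smul_le_absolutelyContinuous {ρ m : Measure Ω} {t : ℝ} (ht0 : 0 < t)
    (hle : ENNReal.ofReal t • ρ ≤ m) : ρ ≪ m := by
  refine Measure.AbsolutelyContinuous.mk fun s hs h0 => ?_
  have h1 : (ENNReal.ofReal t • ρ) s = 0 := le_antisymm (le_trans (hle s) h0.le) zero_le
  rw [Measure.smul_apply, smul_eq_mul] at h1
  simpa [ENNReal.ofReal_eq_zero, not_le.mpr ht0] using mul_eq_zero.mp h1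

lemma llr_le_of_smul_le {ρ m : Measure Ω} [IsProbabilityMeasure ρ] [IsProbabilityMeasure m]
    {t : ℝ} (ht0 : 0 < t) (ht1 : t ≤ 1) (hle : ENNReal.ofReal t • ρ ≤ m) :
    ∀ᵐ ω ∂ρ, llr ρ m ω ≤ -Real.log t := by
  have hac : ρ ≪ m := smul_le_absolutelyContinuous ht0 hle
  have h1 : (ENNReal.ofReal t • ρ).rnDeriv m ≤ᵐ[m] 1 := Measure.rnDeriv_le_one_of_le hle
  have h2 : (ENNReal.ofReal t • ρ).rnDeriv m =ᵐ[m] ENNReal.ofReal t • ρ.rnDeriv m :=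
    Measure.rnDeriv_smul_left_of_ne_top ρ m ENNReal.ofReal_ne_top
  have h3 : ∀ᵐ ω ∂m, ρ.rnDeriv m ω ≤ (ENNReal.ofReal t)⁻¹ := by
    filter_upwards [h1, h2] with ω hω1 hω2
    rw [hω2] at hω1
    simp only [Pi.smul_apply, smul_eq_mul, Pi.one_apply] at hω1
    rw [ENNReal.le_inv_iff_mul_le, mul_comm]
    exact hω1
  filter_upwards [hac.ae_le h3] with ω hω
  have htr : (ρ.rnDeriv m ω).toReal ≤ t⁻¹ := by
    calc (ρ.rnDeriv m ω).toReal ≤ ((ENNReal.ofReal t)⁻¹).toReal :=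
      ENNReal.toReal_mono (by simp [ENNReal.ofReal_eq_zero, not_le.mpr ht0]) hω
    _ = t⁻¹ := by rw [ENNReal.toReal_inv, ENNReal.toReal_ofReal ht0.le]
  rw [llr, ← Real.log_inv]
  rcases eq_or_lt_of_le (ENNReal.toReal_nonneg (a := ρ.rnDeriv m ω)) with h | h
  · rw [← h, Real.log_zero]
    exact Real.log_nonneg ((one_le_inv₀ ht0).mpr ht1)
  · exact Real.log_le_log h htr

lemma mul_klDiv_le_one_of_smul_le {ρ m : Measure Ω} [IsProbabilityMeasure ρ]
    [IsProbabilityMeasure m] {t : ℝ} (ht0 : 0 ≤ t) (ht1 : t ≤ 1)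
    (hle : ENNReal.ofReal t • ρ ≤ m) : ENNReal.ofReal t * klDiv ρ m ≤ 1 := by
  rcases eq_or_lt_of_le ht0 with h | h
  · rw [← h]
    simp
  calc ENNReal.ofReal t * klDiv ρ m
      ≤ ENNReal.ofReal t * ENNReal.ofReal (-Real.log t) := by
        exact mul_le_mul_right (klDiv_le_ofReal (smul_le_absolutelyContinuous h hle)
          (llr_le_of_smul_le h ht1 hle)) _
    _ = ENNReal.ofReal (t * -Real.log t) := (ENNReal.ofReal_mul ht0).symm
    _ ≤ ENNReal.ofReal 1 := by
        refine ENNReal.ofReal_le_ofReal ?_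
        have hlog := Real.log_le_sub_one_of_pos (inv_pos.mpr h)
        rw [Real.log_inv] at hlog
        have hinv : t * t⁻¹ = 1 := mul_inv_cancel₀ h.ne'
        nlinarith
    _ = 1 := ENNReal.ofReal_one

lemma kl_mix_identity (ρ₁ ρ₀ ν : Measure Ω) [IsProbabilityMeasure ρ₁] [IsProbabilityMeasure ρ₀]
    [IsProbabilityMeasure ν] {t : ℝ} (ht0 : 0 ≤ t) (ht1 : t ≤ 1) :
    ENNReal.ofReal t * klDiv ρ₁ ν + ENNReal.ofReal (1 - t) * klDiv ρ₀ ν =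
      (ENNReal.ofReal t * klDiv ρ₁ (ENNReal.ofReal t • ρ₁ + ENNReal.ofReal (1 - t) • ρ₀) +
        ENNReal.ofReal (1 - t) * klDiv ρ₀ (ENNReal.ofReal t • ρ₁ + ENNReal.ofReal (1 - t) • ρ₀)) +
      klDiv (ENNReal.ofReal t • ρ₁ + ENNReal.ofReal (1 - t) • ρ₀) ν := by
  rcases eq_or_lt_of_le ht0 with h0 | h0
  · have hM : ENNReal.ofReal t • ρ₁ + ENNReal.ofReal (1 - t) • ρ₀ = ρ₀ := by
      simp [← h0]
    rw [hM, ← h0, klDiv_self]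
    simp
  rcases eq_or_lt_of_le ht1 with h1 | h1
  · have hM : ENNReal.ofReal t • ρ₁ + ENNReal.ofReal (1 - t) • ρ₀ = ρ₁ := by
      simp [h1]
    rw [hM, h1, klDiv_self]
    simp
  -- interior case
  set a := ENNReal.ofReal t with ha
  set b := ENNReal.ofReal (1 - t) with hb
  set M := a • ρ₁ + b • ρ₀ with hM
  have ha0 : a ≠ 0 := by simp [ha, ENNReal.ofReal_eq_zero, not_le.mpr h0]
  have hb0 : b ≠ 0 := by simp [hb, ENNReal.ofReal_eq_zero]; linarith
  haveI hMP : IsProbabilityMeasure M := isProbabilityMeasure_mix ht0 ht1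
  have hle₁ : a • ρ₁ ≤ M := Measure.le_add_right le_rfl
  have hle₀ : b • ρ₀ ≤ M := Measure.le_add_left le_rfl
  have ac₁ : ρ₁ ≪ M := smul_le_absolutelyContinuous h0 hle₁
  have ac₀ : ρ₀ ≪ M := smul_le_absolutelyContinuous (by linarith) hle₀
  have hllr₁ : ∀ᵐ ω ∂ρ₁, llr ρ₁ M ω ≤ -Real.log t := llr_le_of_smul_le h0 ht1 hle₁
  have hllr₀ : ∀ᵐ ω ∂ρ₀, llr ρ₀ M ω ≤ -Real.log (1 - t) :=
    llr_le_of_smul_le (by linarith) (by linarith) hle₀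
  have Int₁ : Integrable (llr ρ₁ M) ρ₁ := integrable_llr_of_ae_le ac₁ hllr₁
  have Int₀ : Integrable (llr ρ₀ M) ρ₀ := integrable_llr_of_ae_le ac₀ hllr₀
  by_cases hac : M ≪ ν
  · have hac₁ν : ρ₁ ≪ ν := ac₁.trans hac
    have hac₀ν : ρ₀ ≪ ν := ac₀.trans hac
    have chain : ∀ (ρ : Measure Ω), IsProbabilityMeasure ρ → ρ ≪ M →
        (∀ᵐ ω ∂ρ, llr ρ ν ω = llr ρ M ω + llr M ν ω) := by
      intro ρ hP hacρ
      haveI := hP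
      have hacρν : ρ ≪ ν := hacρ.trans hac
      filter_upwards [hacρν.ae_le (Measure.rnDeriv_mul_rnDeriv hacρ),
        Measure.rnDeriv_pos hacρ, hacρ.ae_le (Measure.rnDeriv_lt_top ρ M),
        hacρ.ae_le (Measure.rnDeriv_pos hac), hacρν.ae_le (Measure.rnDeriv_lt_top M ν)]
        with ω hmul hpos1 hlt1 hpos2 hlt2
      rw [llr, llr, llr, ← hmul, Pi.mul_apply, ENNReal.toReal_mul, Real.log_mul]
      · exact (ENNReal.toReal_pos hpos1.ne' hlt1.ne).ne'
      · exact (ENNReal.toReal_pos hpos2.ne' hlt2.ne).ne'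
    have chain₁ := chain ρ₁ inferInstance ac₁
    have chain₀ := chain ρ₀ inferInstance ac₀
    have IntM : Integrable (llr M ν) M ↔
        Integrable (llr M ν) ρ₁ ∧ Integrable (llr M ν) ρ₀ := by
      rw [hM, integrable_add_measure, integrable_smul_measure ha0 ENNReal.ofReal_ne_top,
        integrable_smul_measure hb0 ENNReal.ofReal_ne_top]
    have equiv₁ : Integrable (llr ρ₁ ν) ρ₁ ↔ Integrable (llr M ν) ρ₁ := by
      constructor
      · intro h
        have h2 := ((integrable_congr chain₁).mp h).sub Int₁
        refine h2.congr (ae_of_all _ fun ω => ?_)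
        simp
      · intro h
        exact (integrable_congr chain₁).mpr (Int₁.add h)
    have equiv₀ : Integrable (llr ρ₀ ν) ρ₀ ↔ Integrable (llr M ν) ρ₀ := by
      constructor
      · intro h
        have h2 := ((integrable_congr chain₀).mp h).sub Int₀
        refine h2.congr (ae_of_all _ fun ω => ?_)
        simp
      · intro h
        exact (integrable_congr chain₀).mpr (Int₀.add h)
    by_cases hIntM : Integrable (llr M ν) M
    · obtain ⟨hI1, hI0⟩ := IntM.mp hIntM
      have hint₁ : Integrable (llr ρ₁ ν) ρ₁ := equiv₁.mpr hI1
      have hint₀ : Integrable (llr ρ₀ ν) ρ₀ := equiv₀.mpr hI0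
      have e₁ : ∫ ω, llr ρ₁ ν ω ∂ρ₁ = ∫ ω, llr ρ₁ M ω ∂ρ₁ + ∫ ω, llr M ν ω ∂ρ₁ := by
        rw [integral_congr_ae chain₁, integral_add Int₁ hI1]
      have e₀ : ∫ ω, llr ρ₀ ν ω ∂ρ₀ = ∫ ω, llr ρ₀ M ω ∂ρ₀ + ∫ ω, llr M ν ω ∂ρ₀ := by
        rw [integral_congr_ae chain₀, integral_add Int₀ hI0]
      have eM : ∫ ω, llr M ν ω ∂M = t * ∫ ω, llr M ν ω ∂ρ₁ + (1 - t) * ∫ ω, llr M ν ω ∂ρ₀ := by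
        rw [hM, integral_add_measure ((integrable_smul_measure ha0 ENNReal.ofReal_ne_top).mpr hI1)
          ((integrable_smul_measure hb0 ENNReal.ofReal_ne_top).mpr hI0),
          integral_smul_measure, integral_smul_measure, ha, hb,
          ENNReal.toReal_ofReal ht0, ENNReal.toReal_ofReal (by linarith), smul_eq_mul, smul_eq_mul]
      have n₁ : 0 ≤ ∫ ω, llr ρ₁ ν ω ∂ρ₁ := integral_llr_nonneg hac₁ν hint₁
      have n₀ : 0 ≤ ∫ ω, llr ρ₀ ν ω ∂ρ₀ := integral_llr_nonneg hac₀ν hint₀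
      have nL₁ : 0 ≤ ∫ ω, llr ρ₁ M ω ∂ρ₁ := integral_llr_nonneg ac₁ Int₁
      have nL₀ : 0 ≤ ∫ ω, llr ρ₀ M ω ∂ρ₀ := integral_llr_nonneg ac₀ Int₀
      have nM : 0 ≤ ∫ ω, llr M ν ω ∂M := integral_llr_nonneg hac hIntM
      rw [klDiv, if_pos ⟨hac₁ν, hint₁⟩, klDiv, if_pos ⟨hac₀ν, hint₀⟩,
        klDiv, if_pos ⟨ac₁, Int₁⟩, klDiv, if_pos ⟨ac₀, Int₀⟩, klDiv, if_pos ⟨hac, hIntM⟩]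
      rw [ha, hb, ← ENNReal.ofReal_mul ht0, ← ENNReal.ofReal_mul (by linarith : (0:ℝ) ≤ 1 - t),
        ← ENNReal.ofReal_mul ht0, ← ENNReal.ofReal_mul (by linarith : (0:ℝ) ≤ 1 - t),
        ← ENNReal.ofReal_add (mul_nonneg ht0 n₁) (mul_nonneg (by linarith) n₀),
        ← ENNReal.ofReal_add (mul_nonneg ht0 nL₁) (mul_nonneg (by linarith) nL₀),
        ← ENNReal.ofReal_add (add_nonneg (mul_nonneg ht0 nL₁) (mul_nonneg (by linarith) nL₀)) nM]
      congr 1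
      rw [e₁, e₀, eM]
      ring
    · have hMtop : klDiv M ν = ⊤ := by
        rw [klDiv, if_neg (fun h => hIntM h.2)]
      rw [hMtop, add_top]
      have : ¬ Integrable (llr M ν) ρ₁ ∨ ¬ Integrable (llr M ν) ρ₀ :=
        not_and_or.mp (fun h => hIntM (IntM.mpr h))
      rcases this with h | h
      · have : klDiv ρ₁ ν = ⊤ := by
          rw [klDiv, if_neg (fun hc => h (equiv₁.mp hc.2))]
        rw [this, ENNReal.mul_top ha0, top_add]
      · have : klDiv ρ₀ ν = ⊤ := by
          rw [klDiv, if_neg (fun hc => h (equiv₀.mp hc.2))]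
        rw [this, ENNReal.mul_top hb0, add_top]
  · have hMtop : klDiv M ν = ⊤ := by
      rw [klDiv, if_neg (fun h => hac h.1)]
    rw [hMtop, add_top]
    have : ¬ ρ₁ ≪ ν ∨ ¬ ρ₀ ≪ ν := by
      by_contra hcon
      push_neg at hcon
      refine hac (Measure.AbsolutelyContinuous.mk fun s hs h0s => ?_)
      rw [hM]
      simp only [Measure.coe_add, Pi.add_apply, Measure.smul_apply, smul_eq_mul]
      rw [hcon.1 h0s, hcon.2 h0s]
      simp
    rcases this with h | h
    · have : klDiv ρ₁ ν = ⊤ := by rw [klDiv, if_neg (fun hc => h hc.1)]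
      rw [this, ENNReal.mul_top ha0, top_add]
    · have : klDiv ρ₀ ν = ⊤ := by rw [klDiv, if_neg (fun hc => h hc.1)]
      rw [this, ENNReal.mul_top hb0, add_top]

end MixAux

section MeasAux

variable {X Ω : Type*} [MeasurableSpace X] [MeasurableSpace Ω]
  [MeasurableSpace.CountablyGenerated Ω]

lemma measurable_klDiv (ξ κ : Kernel X Ω) [IsFiniteKernel ξ] [IsFiniteKernel κ] :
    Measurable fun x => klDiv (ξ x) (κ x) := by
  classical
  set g : X → Ω → ℝ := fun x ω => Real.log (Kernel.rnDeriv ξ κ x ω).toReal with hg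
  have hg_meas : StronglyMeasurable (Function.uncurry g) := by
    apply Measurable.stronglyMeasurable
    exact (Kernel.measurable_rnDeriv ξ κ).ennreal_toReal.log
  have hS : MeasurableSet {x | ξ x ≪ κ x} := Kernel.measurableSet_absolutelyContinuous ξ κ
  have hI : MeasurableSet {x | Integrable (g x) (ξ x)} :=
    measurableSet_kernel_integrable hg_meas
  have hint : Measurable fun x => ∫ ω, g x ω ∂(ξ x) :=
    (hg_meas.integral_kernel_prod_right (κ := ξ)).measurable
  have key : ∀ x, ξ x ≪ κ x → g x =ᵐ[ξ x] llr (ξ x) (κ x) := by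
    intro x hx
    filter_upwards [hx.ae_le (Kernel.rnDeriv_eq_rnDeriv_measure (κ := ξ) (η := κ) (a := x))]
      with ω hω
    rw [hg]
    simp only
    rw [hω, llr]
  have heq : (fun x => klDiv (ξ x) (κ x)) =
      ({x | ξ x ≪ κ x} ∩ {x | Integrable (g x) (ξ x)}).piecewise
        (fun x => ENNReal.ofReal (∫ ω, g x ω ∂(ξ x))) (fun _ => ⊤) := by
    funext x
    by_cases hx : ξ x ≪ κ x
    · have hcongr := key x hx
      by_cases hix : Integrable (g x) (ξ x)
      · have hmem : x ∈ ({x | ξ x ≪ κ x} ∩ {x | Integrable (g x) (ξ x)}) := ⟨hx, hix⟩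
        rw [Set.piecewise_eq_of_mem _ _ _ hmem, klDiv,
          if_pos ⟨hx, (integrable_congr hcongr).mp hix⟩,
          integral_congr_ae hcongr]
      · have hmem : x ∉ ({x | ξ x ≪ κ x} ∩ {x | Integrable (g x) (ξ x)}) := fun hmem => hix hmem.2
        rw [Set.piecewise_eq_of_notMem _ _ _ hmem, klDiv,
          if_neg (fun hc => hix ((integrable_congr hcongr).mpr hc.2))]
    · have hmem : x ∉ ({x | ξ x ≪ κ x} ∩ {x | Integrable (g x) (ξ x)}) := fun hmem => hx hmem.1
      rw [Set.piecewise_eq_of_notMem _ _ _ hmem, klDiv,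
        if_neg (fun hc => hx hc.1)]
  rw [heq]
  exact Measurable.piecewise (hS.inter hI) hint.ennreal_ofReal measurable_const

end MeasAux

section KstarKernel

variable {X Ω : Type*} [MeasurableSpace X] [MeasurableSpace Ω]

/-- `kstar` as a kernel. -/
noncomputable def kstarKernel (ρ₁ ρ₀ : Measure Ω) [IsProbabilityMeasure ρ₁]
    [IsProbabilityMeasure ρ₀] (f : X → ℝ) (hf_meas : Measurable f) : Kernel X Ω where
  toFun := kstar ρ₁ ρ₀ f
  measurable' := by
    apply Measure.measurable_of_measurable_coe
    intro s hs
    simp only [kstar, Measure.coe_add, Pi.add_apply, Measure.smul_apply, smul_eq_mul]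
    exact (hf_meas.ennreal_ofReal.mul_const _).add
      (((measurable_const.sub hf_meas).ennreal_ofReal).mul_const _)

lemma kstarKernel_apply (ρ₁ ρ₀ : Measure Ω) [IsProbabilityMeasure ρ₁] [IsProbabilityMeasure ρ₀]
    (f : X → ℝ) (hf_meas : Measurable f) (x : X) :
    kstarKernel ρ₁ ρ₀ f hf_meas x = kstar ρ₁ ρ₀ f x := rfl

instance kstar_isMarkov (ρ₁ ρ₀ : Measure Ω) [IsProbabilityMeasure ρ₁] [IsProbabilityMeasure ρ₀]
    {f : X → ℝ} {hf_meas : Measurable f} [Fact (∀ x, f x ∈ Set.Icc (0:ℝ) 1)] :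
    IsMarkovKernel (kstarKernel ρ₁ ρ₀ f hf_meas) := by
  constructor
  intro x
  rw [kstarKernel_apply]
  exact isProbabilityMeasure_mix (Fact.out (p := ∀ x, f x ∈ Set.Icc (0:ℝ) 1) x).1
    (Fact.out (p := ∀ x, f x ∈ Set.Icc (0:ℝ) 1) x).2

end KstarKernel

/-- **Uniqueness of the global optimal discriminator (Theorem 1, uniqueness part).** In the
setting of the global optimal-discriminator theorem (`X` a measurable space, `Ω` countably
generated, `P, Q` finite measures on `X`, `ρ₁, ρ₀` probability measures on `Ω`, `f : X → [0,1]`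
a measurable Radon–Nikodym derivative of `P` with respect to `P + Q`, and
`κ*(x) := f(x)•ρ₁ + (1−f(x))•ρ₀`), a Markov kernel `κ` from `X` to `Ω` achieves equality
`∫⁻ KL(ρ₁‖κ(x)) dP + ∫⁻ KL(ρ₀‖κ(x)) dQ = ∫⁻ KL(ρ₁‖κ*(x)) dP + ∫⁻ KL(ρ₀‖κ*(x)) dQ`
if and only if `κ(x) = κ*(x)` for `(P+Q)`-almost every `x`. -/
theorem kernel_kl_optimal_discriminator_unique {X Ω : Type*}
    [MeasurableSpace X] [MeasurableSpace Ω] [MeasurableSpace.CountablyGenerated Ω]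
    (P Q : Measure X) [IsFiniteMeasure P] [IsFiniteMeasure Q]
    (ρ₁ ρ₀ : Measure Ω) [IsProbabilityMeasure ρ₁] [IsProbabilityMeasure ρ₀]
    (f : X → ℝ) (hf_meas : Measurable f) (hf01 : ∀ x, f x ∈ Set.Icc (0 : ℝ) 1)
    (hP : P = (P + Q).withDensity (fun x => ENNReal.ofReal (f x)))
    (κ : Kernel X Ω) [IsMarkovKernel κ] :
    ∫⁻ x, klDiv ρ₁ (κ x) ∂P + ∫⁻ x, klDiv ρ₀ (κ x) ∂Q =
        ∫⁻ x, klDiv ρ₁ (kstar ρ₁ ρ₀ f x) ∂P + ∫⁻ x, klDiv ρ₀ (kstar ρ₁ ρ₀ f x) ∂Q ↔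
      ∀ᵐ x ∂(P + Q), κ x = kstar ρ₁ ρ₀ f x := by
  classical
  haveI : Fact (∀ x, f x ∈ Set.Icc (0:ℝ) 1) := ⟨hf01⟩
  set μ := P + Q with hμ
  set tx : X → ℝ≥0∞ := fun x => ENNReal.ofReal (f x) with htx
  set sx : X → ℝ≥0∞ := fun x => ENNReal.ofReal (1 - f x) with hsx
  set κs : Kernel X Ω := kstarKernel ρ₁ ρ₀ f hf_meas with hκs
  haveI : IsMarkovKernel κs := kstar_isMarkov ρ₁ ρ₀
  have hκs_apply : ∀ x, κs x = kstar ρ₁ ρ₀ f x := fun _ => rfl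
  haveI hkprob : ∀ x, IsProbabilityMeasure (kstar ρ₁ ρ₀ f x) := fun x =>
    isProbabilityMeasure_mix (hf01 x).1 (hf01 x).2
  -- densities
  have htx_meas : Measurable tx := hf_meas.ennreal_ofReal
  have hsx_meas : Measurable sx := (measurable_const.sub hf_meas).ennreal_ofReal
  have hQ : Q = μ.withDensity sx := by
    have h1 : tx + sx = fun _ => (1 : ℝ≥0∞) := by
      funext x
      simp only [Pi.add_apply, htx, hsx]
      rw [← ENNReal.ofReal_add (hf01 x).1 (by linarith [(hf01 x).2])]
      simp
    have hsum : μ.withDensity tx + μ.withDensity sx = μ := by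
      rw [← withDensity_add_left htx_meas, h1]
      have : μ.withDensity (fun _ => (1:ℝ≥0∞)) = μ.withDensity 1 := rfl
      rw [this, withDensity_one]
    have h2 : P + μ.withDensity sx = P + Q := by
      conv_lhs => rw [hP]
      rw [← hμ] at *
      rw [hsum]
    ext s hs
    have h4 : P s + (μ.withDensity sx) s = P s + Q s := by
      have := congrArg (fun (m : Measure X) => m s) h2
      simpa [Measure.add_apply] using this
    exact ((ENNReal.add_right_inj (measure_ne_top P s)).mp h4).symm
  -- integral rewriting
  have hPint : ∀ g : X → ℝ≥0∞, ∫⁻ x, g x ∂P = ∫⁻ x, tx x * g x ∂μ := by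
    intro g
    conv_lhs => rw [hP]
    rw [lintegral_withDensity_eq_lintegral_mul_non_measurable μ htx_meas
      (ae_of_all _ fun x => ENNReal.ofReal_lt_top) g]
    rfl
  have hQint : ∀ g : X → ℝ≥0∞, ∫⁻ x, g x ∂Q = ∫⁻ x, sx x * g x ∂μ := by
    intro g
    conv_lhs => rw [hQ]
    rw [lintegral_withDensity_eq_lintegral_mul_non_measurable μ hsx_meas
      (ae_of_all _ fun x => ENNReal.ofReal_lt_top) g]
    rfl
  -- measurable integrands
  have hg1 : Measurable fun x => klDiv ρ₁ (κ x) := by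
    have := measurable_klDiv (Kernel.const X ρ₁) κ
    simpa using this
  have hg0 : Measurable fun x => klDiv ρ₀ (κ x) := by
    have := measurable_klDiv (Kernel.const X ρ₀) κ
    simpa using this
  have hg1s : Measurable fun x => klDiv ρ₁ (kstar ρ₁ ρ₀ f x) := by
    have := measurable_klDiv (Kernel.const X ρ₁) κs
    simpa [hκs_apply] using this
  have hg0s : Measurable fun x => klDiv ρ₀ (kstar ρ₁ ρ₀ f x) := by
    have := measurable_klDiv (Kernel.const X ρ₀) κs
    simpa [hκs_apply] using this
  have hC : Measurable fun x => klDiv (kstar ρ₁ ρ₀ f x) (κ x) := by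
    have := measurable_klDiv κs κ
    simpa [hκs_apply] using this
  -- B and its finiteness
  set B : X → ℝ≥0∞ := fun x => tx x * klDiv ρ₁ (kstar ρ₁ ρ₀ f x) +
    sx x * klDiv ρ₀ (kstar ρ₁ ρ₀ f x) with hB
  have hB_meas : Measurable B := (htx_meas.mul hg1s).add (hsx_meas.mul hg0s)
  have hB_le : ∀ x, B x ≤ 2 := by
    intro x
    haveI := hkprob x
    have hle₁ : tx x • ρ₁ ≤ kstar ρ₁ ρ₀ f x := Measure.le_add_right le_rfl
    have hle₀ : sx x • ρ₀ ≤ kstar ρ₁ ρ₀ f x := Measure.le_add_left le_rfl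
    have h1 := mul_klDiv_le_one_of_smul_le (hf01 x).1 (hf01 x).2 hle₁
    have h0 := mul_klDiv_le_one_of_smul_le (t := 1 - f x) (by linarith [(hf01 x).2])
      (by linarith [(hf01 x).1]) hle₀
    calc B x ≤ 1 + 1 := add_le_add h1 h0
      _ = 2 := one_add_one_eq_two
  have hB_fin : ∫⁻ x, B x ∂μ ≠ ⊤ := by
    have hle : ∫⁻ x, B x ∂μ ≤ 2 * μ Set.univ := by
      calc ∫⁻ x, B x ∂μ ≤ ∫⁻ _, 2 ∂μ := lintegral_mono hB_le
        _ = 2 * μ Set.univ := lintegral_const 2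
    exact (hle.trans_lt (ENNReal.mul_lt_top (by simp) (measure_lt_top μ _))).ne
  -- pointwise identity
  have hpoint : ∀ x, tx x * klDiv ρ₁ (κ x) + sx x * klDiv ρ₀ (κ x) =
      B x + klDiv (kstar ρ₁ ρ₀ f x) (κ x) := by
    intro x
    exact kl_mix_identity ρ₁ ρ₀ (κ x) (hf01 x).1 (hf01 x).2
  -- main computation
  rw [hPint (fun x => klDiv ρ₁ (κ x)), hQint (fun x => klDiv ρ₀ (κ x)),
    hPint (fun x => klDiv ρ₁ (kstar ρ₁ ρ₀ f x)), hQint (fun x => klDiv ρ₀ (kstar ρ₁ ρ₀ f x))]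
  rw [← lintegral_add_left (f := fun x => tx x * klDiv ρ₁ (κ x)) (htx_meas.mul hg1),
    ← lintegral_add_left (f := fun x => tx x * klDiv ρ₁ (kstar ρ₁ ρ₀ f x)) (htx_meas.mul hg1s)]
  have hLHS : ∫⁻ x, tx x * klDiv ρ₁ (κ x) + sx x * klDiv ρ₀ (κ x) ∂μ =
      ∫⁻ x, B x ∂μ + ∫⁻ x, klDiv (kstar ρ₁ ρ₀ f x) (κ x) ∂μ := by
    rw [lintegral_congr hpoint, lintegral_add_left hB_meas]
  rw [hLHS]
  constructor
  · intro h
    have h0 : ∫⁻ x, klDiv (kstar ρ₁ ρ₀ f x) (κ x) ∂μ = 0 := by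
      have h2 : ∫⁻ x, B x ∂μ + ∫⁻ x, klDiv (kstar ρ₁ ρ₀ f x) (κ x) ∂μ =
          ∫⁻ x, B x ∂μ + 0 := by rw [add_zero]; exact h
      exact (ENNReal.add_right_inj hB_fin).mp h2
    have h3 := (lintegral_eq_zero_iff hC).mp h0
    filter_upwards [h3] with x hx
    haveI := hkprob x
    exact ((klDiv_eq_zero_iff).mp hx).symm
  · intro h
    have h2 : ∀ᵐ x ∂μ, klDiv (kstar ρ₁ ρ₀ f x) (κ x) = 0 := by
      filter_upwards [h] with x hx
      haveI := hkprob x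
      exact klDiv_eq_zero_iff.mpr hx.symm
    have h0 : ∫⁻ x, klDiv (kstar ρ₁ ρ₀ f x) (κ x) ∂μ = 0 := by
      rw [lintegral_congr_ae h2, lintegral_zero]
    rw [h0, add_zero]
end

section
/- Let P, Q be probability measures on a measurable space X and let ρ₁, ρ₀ be probability measures on a measurable space Ω. Then the equality of measures on X × Ω, P ⊗ ρ₁ + Q ⊗ ρ₀ = P ⊗ ρ₀ + Q ⊗ ρ₁, holds if and only if P = Q or ρ₁ = ρ₀. -/
open MeasureTheory

/-- **Mixture-of-products equality (crux of Theorem 2).** For probability measures `P, Q` on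
`X` and `ρ₁, ρ₀` on `Ω`, the equality of measures on `X × Ω`
`P ⊗ ρ₁ + Q ⊗ ρ₀ = P ⊗ ρ₀ + Q ⊗ ρ₁` holds if and only if `P = Q` or `ρ₁ = ρ₀`. -/
theorem prod_mixture_eq_iff {X Ω : Type*} [MeasurableSpace X] [MeasurableSpace Ω]
    (P Q : Measure X) [IsProbabilityMeasure P] [IsProbabilityMeasure Q]
    (ρ₁ ρ₀ : Measure Ω) [IsProbabilityMeasure ρ₁] [IsProbabilityMeasure ρ₀] :
    P.prod ρ₁ + Q.prod ρ₀ = P.prod ρ₀ + Q.prod ρ₁ ↔ P = Q ∨ ρ₁ = ρ₀ := by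
  constructor
  · intro h
    by_cases hPQ : P = Q
    · exact Or.inl hPQ
    right
    obtain ⟨A, hA, hne⟩ : ∃ A, MeasurableSet A ∧ P A ≠ Q A := by
      by_contra hc
      push_neg at hc
      exact hPQ (Measure.ext fun s hs => hc s hs)
    ext B hB
    have key := congrArg (fun μ : Measure (X × Ω) => μ (A ×ˢ B)) h
    simp only [Measure.coe_add, Pi.add_apply, Measure.prod_prod] at key
    have hPA : P A ≠ ⊤ := (measure_lt_top P A).ne
    have hQA : Q A ≠ ⊤ := (measure_lt_top Q A).ne
    have h1 : ρ₁ B ≠ ⊤ := (measure_lt_top ρ₁ B).ne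
    have h0 : ρ₀ B ≠ ⊤ := (measure_lt_top ρ₀ B).ne
    have key' : (P A).toReal * (ρ₁ B).toReal + (Q A).toReal * (ρ₀ B).toReal =
        (P A).toReal * (ρ₀ B).toReal + (Q A).toReal * (ρ₁ B).toReal := by
      have := congrArg ENNReal.toReal key
      rwa [ENNReal.toReal_add (by finiteness) (by finiteness),
        ENNReal.toReal_add (by finiteness) (by finiteness),
        ENNReal.toReal_mul, ENNReal.toReal_mul, ENNReal.toReal_mul,
        ENNReal.toReal_mul] at this
    have hane : (P A).toReal ≠ (Q A).toReal := fun hcon =>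
      hne ((ENNReal.toReal_eq_toReal_iff' hPA hQA).mp hcon)
    have : ((P A).toReal - (Q A).toReal) * ((ρ₁ B).toReal - (ρ₀ B).toReal) = 0 := by
      ring_nf
      nlinarith [key']
    rcases mul_eq_zero.mp this with hz | hz
    · exact absurd (by linarith) hane
    · have : (ρ₁ B).toReal = (ρ₀ B).toReal := by linarith
      exact (ENNReal.toReal_eq_toReal_iff' h1 h0).mp this
  · rintro (rfl | rfl) <;> rw [add_comm]
end

section
/- Let P, Q be probability measures on a measurable space X and let ρ₁, ρ₀ be probability measures on a measurable space Ω with ρ₁ ≠ ρ₀. Then the equality of measures on X × Ω, (1/2)•(P ⊗ ρ₁ + Q ⊗ ρ₀) = ((1/2)•(P + Q)) ⊗ ((1/2)•(ρ₁ + ρ₀)), holds if and only if P = Q. -/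
open MeasureTheory ENNReal

/-- **Joint distribution equals product of marginals iff `P = Q` (Theorem 2, equality case).**
For probability measures `P, Q` on `X` and `ρ₁ ≠ ρ₀` on `Ω`, the equality of measures on
`X × Ω`, `(1/2)•(P ⊗ ρ₁ + Q ⊗ ρ₀) = ((1/2)•(P + Q)) ⊗ ((1/2)•(ρ₁ + ρ₀))`,
holds if and only if `P = Q`. -/
theorem half_mixture_prod_eq_iff {X Ω : Type*} [MeasurableSpace X] [MeasurableSpace Ω]
    (P Q : Measure X) [IsProbabilityMeasure P] [IsProbabilityMeasure Q]
    (ρ₁ ρ₀ : Measure Ω) [IsProbabilityMeasure ρ₁] [IsProbabilityMeasure ρ₀]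
    (hρ : ρ₁ ≠ ρ₀) :
    (2⁻¹ : ℝ≥0∞) • (P.prod ρ₁ + Q.prod ρ₀) =
        ((2⁻¹ : ℝ≥0∞) • (P + Q)).prod ((2⁻¹ : ℝ≥0∞) • (ρ₁ + ρ₀)) ↔ P = Q := by
  constructor
  · intro h
    obtain ⟨t, htm, htne⟩ : ∃ t, MeasurableSet t ∧ ρ₁ t ≠ ρ₀ t := by
      by_contra hc
      push_neg at hc
      exact hρ (Measure.ext fun t htm => hc t htm)
    ext s hs
    have key := congrArg (fun μ : Measure (X × Ω) => μ (s ×ˢ t)) h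
    simp only [Measure.smul_apply, Measure.coe_add, Pi.add_apply, Measure.prod_prod,
      smul_eq_mul] at key
    set a := (P s).toReal with ha
    set b := (Q s).toReal with hb
    set c := (ρ₁ t).toReal with hc
    set d := (ρ₀ t).toReal with hd
    have hPf : P s ≠ ⊤ := measure_ne_top _ _
    have hQf : Q s ≠ ⊤ := measure_ne_top _ _
    have h1f : ρ₁ t ≠ ⊤ := measure_ne_top _ _
    have h0f : ρ₀ t ≠ ⊤ := measure_ne_top _ _
    have key' : 2⁻¹ * (a * c + b * d) = 2⁻¹ * (a + b) * (2⁻¹ * (c + d)) := by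
      have := congrArg ENNReal.toReal key
      simp only [ENNReal.toReal_mul, ENNReal.toReal_add hPf hQf,
        ENNReal.toReal_add h1f h0f,
        ENNReal.toReal_add (mul_ne_top hPf h1f) (mul_ne_top hQf h0f)] at this
      simpa using this
    have hcd : c ≠ d := fun hcd =>
      htne ((ENNReal.toReal_eq_toReal_iff' h1f h0f).mp hcd)
    have hab : a = b := by
      have hz : (a - b) * (c - d) = 0 := by nlinarith [key']
      rcases mul_eq_zero.mp hz with h' | h'
      · linarith
      · exact absurd (by linarith) hcd
    exact (ENNReal.toReal_eq_toReal_iff' hPf hQf).mp hab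
  · rintro rfl
    haveI : IsFiniteMeasure ((2⁻¹ : ℝ≥0∞) • (P + P)) :=
      ⟨by simp [Measure.smul_apply]⟩
    haveI : IsFiniteMeasure ((2⁻¹ : ℝ≥0∞) • (ρ₁ + ρ₀)) :=
      ⟨by simp [Measure.smul_apply]⟩
    refine (Measure.prod_eq fun s t hs ht => ?_).symm
    simp only [Measure.smul_apply, Measure.coe_add, Pi.add_apply, Measure.prod_prod,
      smul_eq_mul]
    rw [← mul_add (P s), ← two_mul (P s), ← mul_assoc (2⁻¹ : ℝ≥0∞) 2,
      ENNReal.inv_mul_cancel two_ne_zero ENNReal.ofNat_ne_top, one_mul]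
    ring
end
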